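/- Let X be a Banach space whose unit sphere contains a uniformly strongly exposed set S with closed convex hull equal to B_X. Then for every Banach space Y ≠ {0}, the set of absolutely strongly exposing operators from X to Y is dense in the space L(X,Y) of bounded linear operators with the operator norm. -/

import Mathlib

/-!
Starting from `T₀ = T`, perturb step by step: pick `xₙ ∈ S` almost norming `Tₙ` (possible because
the closed convex hull of `S` is the ball) and set `Tₙ₊₁ = Tₙ + βₙ F(xₙ) ⊗ yₙ`, where `yₙ` is a
unit vector pointing along `Tₙ xₙ`. With `βₙ = c / (n+1)!` the perturbations are summable, and
the limit `T'` satisfies `βₙ (1 - |F(xₙ) u|) ≤ ‖T'‖ - ‖T' u‖ + 3 βₙ₊₁` on the unit ball. As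
`βₙ₊₁ / βₙ → 0`, any norming sequence of `T'`, including `(xₙ)` itself, eventually satisfies
`|F(xₙ) u| ≈ 1` for each fixed large `n`, hence lies close to `±xₙ` by uniform strong exposure.
So `(xₙ)` is Cauchy up to sign, its sign-corrected limit `x` exists, and every norming sequence
converges to `{x, -x}`.
-/

open Filter Topology

/-- `S` is a uniformly strongly exposed subset of the unit sphere of `X`: every `x ∈ S` is a
unit vector, and there is a family of functionals `(F x)_{x ∈ S}` with `‖F x‖ = F x x = 1`
such that for every `ε > 0` there is `δ > 0` with: `x ∈ S`, `‖z‖ ≤ 1` and `F x z > 1 - δ`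
imply `‖x - z‖ < ε`. -/
def UnifStronglyExposed {X : Type*} [NormedAddCommGroup X] [NormedSpace ℝ X]
    (S : Set X) : Prop :=
  (∀ x ∈ S, ‖x‖ = 1) ∧
  ∃ F : X → X →L[ℝ] ℝ,
    (∀ x ∈ S, ‖F x‖ = 1 ∧ F x x = 1) ∧
    ∀ ε > (0 : ℝ), ∃ δ > (0 : ℝ), ∀ x ∈ S, ∀ z : X, ‖z‖ ≤ 1 → F x z > 1 - δ → ‖x - z‖ < ε

/-- `T` is an absolutely strongly exposing operator: there is a unit vector `x` such that
every sequence of the unit ball on which `‖T ·‖` tends to `‖T‖` has a subsequence converging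
in norm to `x` or to `-x`. -/
def AbsStronglyExposing {X Y : Type*} [NormedAddCommGroup X] [NormedSpace ℝ X]
    [NormedAddCommGroup Y] [NormedSpace ℝ Y] (T : X →L[ℝ] Y) : Prop :=
  ∃ x : X, ‖x‖ = 1 ∧ ∀ u : ℕ → X, (∀ n, ‖u n‖ ≤ 1) →
    Tendsto (fun n => ‖T (u n)‖) atTop (𝓝 ‖T‖) →
      ∃ σ : ℕ → ℕ, StrictMono σ ∧
        (Tendsto (fun k => u (σ k)) atTop (𝓝 x) ∨ Tendsto (fun k => u (σ k)) atTop (𝓝 (-x)))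

section SignDist

variable {E : Type*} [NormedAddCommGroup E]

noncomputable def signDist (a b : E) : ℝ := min ‖a - b‖ ‖a + b‖

theorem signDist_comm (a b : E) : signDist a b = signDist b a := by
  simp only [signDist, norm_sub_rev a b, add_comm a b]

theorem signDist_neg_left (a b : E) : signDist (-a) b = signDist a b := by
  rw [signDist, signDist, ← norm_neg (-a - b), ← norm_neg (-a + b), min_comm]
  congr 2 <;> abel

theorem signDist_triangle (a b c : E) : signDist a c ≤ signDist a b + signDist b c := by
  unfold signDist
  rcases min_choice ‖a - b‖ ‖a + b‖ with h₁ | h₁ <;>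
    rcases min_choice ‖b - c‖ ‖b + c‖ with h₂ | h₂ <;> rw [h₁, h₂]
  · exact (min_le_left _ _).trans (norm_sub_le_norm_sub_add_norm_sub a b c)
  · exact (min_le_right _ _).trans <|
      (congrArg norm (by abel : a + c = (a - b) + (b + c))).trans_le (norm_add_le _ _)
  · exact (min_le_right _ _).trans <|
      (congrArg norm (by abel : a + c = (a + b) - (b - c))).trans_le (norm_sub_le _ _)
  · exact (min_le_left _ _).trans <|
      (congrArg norm (by abel : a - c = (a + b) - (b + c))).trans_le (norm_sub_le _ _)

theorem norm_sub_lt_of_signDist_lt [NormedSpace ℝ E] {u v : E} {ε : ℝ} (hu : ‖u‖ = 1)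
    (huv : ‖u - v‖ < 1) (h : signDist u v < ε) (hε : ε ≤ 1) : ‖u - v‖ < ε := by
  refine (min_lt_iff.1 h).resolve_right fun h' => ?_
  have : ‖(2 : ℝ) • u‖ ≤ ‖u - v‖ + ‖u + v‖ :=
    (congrArg norm (by rw [two_smul]; abel : (2 : ℝ) • u = (u - v) + (u + v))).trans_le
      (norm_add_le _ _)
  rw [norm_smul, hu] at this
  norm_num at this
  linarith

theorem cauchySeq_of_signDist_lt [NormedSpace ℝ E] {b : ℕ → E} {c : E} {N₀ : ℕ}
    (hb : ∀ n, ‖b n‖ = 1) (hc : ∀ n ≥ N₀, ‖b n - c‖ < 1 / 2)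
    (h : ∀ ε > 0, ∃ N, ∀ m ≥ N, ∀ n ≥ N, signDist (b m) (b n) < ε) : CauchySeq b := by
  refine Metric.cauchySeq_iff.2 fun ε hε => ?_
  obtain ⟨N, hN⟩ := h (min ε 1) (by positivity)
  refine ⟨max N N₀, fun m hm n hn => ?_⟩
  have hnear : ‖b m - b n‖ < 1 :=
    calc ‖b m - b n‖ ≤ ‖b m - c‖ + ‖c - b n‖ := norm_sub_le_norm_sub_add_norm_sub _ _ _
      _ < 1 / 2 + 1 / 2 := by
          rw [norm_sub_rev c]
          gcongr <;> apply hc <;> exact le_of_max_le_right ‹_›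
      _ = 1 := by norm_num
  rw [dist_eq_norm]
  exact (norm_sub_lt_of_signDist_lt (hb m) hnear
    (hN m (le_of_max_le_left hm) n (le_of_max_le_left hn)) (min_le_right _ _)).trans_le
    (min_le_left _ _)

theorem exists_norm_eq_one_eventually_signDist_lt [NormedSpace ℝ E] [CompleteSpace E]
    {a : ℕ → E} (ha : ∀ n, ‖a n‖ = 1)
    (h : ∀ ε > 0, ∃ N, ∀ m ≥ N, ∀ n ≥ N, signDist (a m) (a n) < ε) :
    ∃ x, ‖x‖ = 1 ∧ ∀ ε > 0, ∀ᶠ n in atTop, signDist (a n) x < ε := by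
  obtain ⟨N₀, hN₀⟩ := h (1 / 2) (by norm_num)
  -- Flip signs so that all terms lie near `a N₀`; there `signDist` and `dist` agree.
  have hflip : ∀ n, ∃ b, (b = a n ∨ b = -a n) ∧ ‖b - a N₀‖ = signDist (a n) (a N₀) := by
    intro n
    rcases min_choice ‖a n - a N₀‖ ‖a n + a N₀‖ with h | h
    · exact ⟨a n, Or.inl rfl, h.symm⟩
    · refine ⟨-a n, Or.inr rfl, ?_⟩
      rw [signDist, h, ← norm_neg]
      congr 1
      abel
  choose b hb hb_dist using hflip
  have hb_signDist : ∀ n y, signDist (b n) y = signDist (a n) y := fun n y => by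
    rcases hb n with h | h <;> simp only [h, signDist_neg_left]
  have hb_norm : ∀ n, ‖b n‖ = 1 := fun n => by rcases hb n with h | h <;> simp [h, ha]
  have hcauchy : CauchySeq b := by
    refine cauchySeq_of_signDist_lt (c := a N₀) (N₀ := N₀) hb_norm (fun n hn => ?_) fun ε hε => ?_
    · rw [hb_dist]
      exact hN₀ n hn N₀ le_rfl
    · obtain ⟨N, hN⟩ := h ε hε
      refine ⟨N, fun m hm n hn => ?_⟩
      rw [hb_signDist, signDist_comm, hb_signDist, signDist_comm]
      exact hN m hm n hn
  obtain ⟨x, hx⟩ := cauchySeq_tendsto_of_complete hcauchy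
  refine ⟨x, ?_, fun ε hε => ?_⟩
  · have := hx.norm
    simp only [hb_norm] at this
    exact (tendsto_nhds_unique tendsto_const_nhds this).symm
  · filter_upwards [Metric.tendsto_nhds.1 hx ε hε] with n hn
    rw [← hb_signDist, dist_eq_norm] at *
    exact (min_le_left _ _).trans_lt hn

theorem exists_strictMono_tendsto_of_eventually_signDist_lt {u : ℕ → E} {x : E}
    (h : ∀ ε > 0, ∀ᶠ k in atTop, signDist (u k) x < ε) :
    ∃ σ : ℕ → ℕ, StrictMono σ ∧
      (Tendsto (fun k => u (σ k)) atTop (𝓝 x) ∨ Tendsto (fun k => u (σ k)) atTop (𝓝 (-x))) := by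
  by_cases hfreq : ∃ᶠ k in atTop, ‖u k - x‖ ≤ ‖u k + x‖
  · obtain ⟨σ, hσ, hle⟩ := extraction_of_frequently_atTop hfreq
    refine ⟨σ, hσ, Or.inl (Metric.tendsto_nhds.2 fun ε hε => ?_)⟩
    filter_upwards [hσ.tendsto_atTop.eventually (h ε hε)] with k hk
    rwa [dist_eq_norm, ← min_eq_left (hle k)]
  · obtain ⟨σ, hσ, hlt⟩ := extraction_of_eventually_atTop (not_frequently.1 hfreq)
    refine ⟨σ, hσ, Or.inr (Metric.tendsto_nhds.2 fun ε hε => ?_)⟩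
    filter_upwards [hσ.tendsto_atTop.eventually (h ε hε)] with k hk
    rwa [dist_eq_norm, sub_neg_eq_add, ← min_eq_right (not_le.1 (hlt k)).le]

end SignDist

section Exposure

variable {X : Type*} [NormedAddCommGroup X] [NormedSpace ℝ X]

theorem exists_pos_forall_signDist_lt {S : Set X} {F : X → X →L[ℝ] ℝ}
    (hexp : ∀ ε > (0 : ℝ), ∃ δ > (0 : ℝ), ∀ x ∈ S, ∀ z : X, ‖z‖ ≤ 1 → F x z > 1 - δ →
      ‖x - z‖ < ε) {ε : ℝ} (hε : 0 < ε) :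
    ∃ δ > 0, ∀ x ∈ S, ∀ z : X, ‖z‖ ≤ 1 → 1 - δ < |F x z| → signDist x z < ε := by
  obtain ⟨δ, hδ, hδε⟩ := hexp ε hε
  refine ⟨δ, hδ, fun x hx z hz hFz => ?_⟩
  rcases le_or_gt 0 (F x z) with hpos | hneg
  · exact (min_le_left _ _).trans_lt (hδε x hx z hz (by rwa [abs_of_nonneg hpos] at hFz))
  · have := hδε x hx (-z) (by rwa [norm_neg])
      (by rw [map_neg]; rwa [abs_of_neg hneg] at hFz)
    rw [sub_neg_eq_add] at this
    exact (min_le_right _ _).trans_lt this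

theorem absStronglyExposing_of_eventually_signDist_lt [CompleteSpace X]
    {Y : Type*} [NormedAddCommGroup Y] [NormedSpace ℝ Y] {T : X →L[ℝ] Y} {a : ℕ → X}
    (ha : ∀ n, ‖a n‖ = 1) (hnorming : Tendsto (fun n => ‖T (a n)‖) atTop (𝓝 ‖T‖))
    (h : ∀ ε > 0, ∃ n, ∀ u : ℕ → X, (∀ k, ‖u k‖ ≤ 1) →
      Tendsto (fun k => ‖T (u k)‖) atTop (𝓝 ‖T‖) → ∀ᶠ k in atTop, signDist (a n) (u k) < ε) :
    AbsStronglyExposing T := by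
  have hcauchy : ∀ ε > 0, ∃ N, ∀ m ≥ N, ∀ n ≥ N, signDist (a m) (a n) < ε := by
    intro ε hε
    obtain ⟨n, hn⟩ := h (ε / 2) (by positivity)
    obtain ⟨N, hN⟩ := eventually_atTop.1 (hn a (fun k => (ha k).le) hnorming)
    refine ⟨N, fun m hm m' hm' => ?_⟩
    calc signDist (a m) (a m') ≤ signDist (a m) (a n) + signDist (a n) (a m') :=
          signDist_triangle _ _ _
      _ < ε / 2 + ε / 2 := by rw [signDist_comm]; gcongr <;> apply hN <;> assumption
      _ = ε := add_halves ε
  obtain ⟨x, hx, hax⟩ := exists_norm_eq_one_eventually_signDist_lt ha hcauchy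
  refine ⟨x, hx, fun u hu hTu => exists_strictMono_tendsto_of_eventually_signDist_lt ?_⟩
  intro ε hε
  obtain ⟨n, hn⟩ := h (ε / 3) (by positivity)
  obtain ⟨m, hnm, hmx⟩ :=
    ((hn a (fun k => (ha k).le) hnorming).and (hax (ε / 3) (by positivity))).exists
  filter_upwards [hn u hu hTu] with k hk
  calc signDist (u k) x ≤ signDist (u k) (a n) + signDist (a n) x := signDist_triangle _ _ _
    _ ≤ signDist (u k) (a n) + (signDist (a n) (a m) + signDist (a m) x) := by
        gcongr; exact signDist_triangle _ _ _
    _ < ε / 3 + (ε / 3 + ε / 3) := by rw [signDist_comm] at hk; gcongr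
    _ = ε := by ring

end Exposure

section Weights

theorem le_div_two_pow_of_two_mul_le {β : ℕ → ℝ} (hβ2 : ∀ n, 2 * β (n + 1) ≤ β n) (n k : ℕ) :
    β (n + k) ≤ β n / 2 ^ k := by
  induction k with
  | zero => simp
  | succ k ih =>
    rw [← add_assoc, pow_succ, ← div_div]
    linarith [hβ2 (n + k)]

theorem tendsto_zero_of_two_mul_le {β : ℕ → ℝ} (hβ : ∀ n, 0 < β n)
    (hβ2 : ∀ n, 2 * β (n + 1) ≤ β n) : Tendsto β atTop (𝓝 0) :=
  squeeze_zero (fun n => (hβ n).le) (fun n => by simpa using le_div_two_pow_of_two_mul_le hβ2 0 n)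
    (tendsto_const_nhds.div_atTop (tendsto_pow_atTop_atTop_of_one_lt one_lt_two))

theorem exists_weights_ratio_tendsto_zero {c : ℝ} (hc : 0 < c) :
    ∃ β : ℕ → ℝ, β 0 = c ∧ (∀ n, 0 < β n) ∧ (∀ n, 2 * β (n + 1) ≤ β n) ∧
      Tendsto (fun n => β (n + 1) / β n) atTop (𝓝 0) := by
  have hratio : ∀ n : ℕ, c / (n + 1 + 1).factorial / (c / (n + 1).factorial) =
      1 / ((n + 1 : ℕ) + 1) := by
    intro n
    rw [Nat.factorial_succ (n + 1)]
    push_cast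
    field_simp
  refine ⟨fun n => c / (n + 1).factorial, by simp, fun n => by positivity, fun n => ?_, ?_⟩
  · dsimp only
    rw [Nat.factorial_succ (n + 1), Nat.cast_mul, ← div_div, mul_div_assoc']
    gcongr
    rw [mul_div_assoc', div_le_iff₀ (by positivity)]
    push_cast
    nlinarith [(n.cast_nonneg : (0 : ℝ) ≤ n)]
  · simp only [hratio]
    exact (tendsto_one_div_add_atTop_nhds_zero_nat).comp (tendsto_add_atTop_nat 1)

variable {E : Type*} [SeminormedAddCommGroup E] {g : ℕ → E} {β : ℕ → ℝ}

theorem cauchySeq_of_norm_sub_le (hβ2 : ∀ n, 2 * β (n + 1) ≤ β n)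
    (hg : ∀ n, ‖g (n + 1) - g n‖ ≤ β n) : CauchySeq g :=
  cauchySeq_of_le_geometric_two (C := 2 * β 0) fun n => by
    rw [dist_comm, dist_eq_norm]
    have := le_div_two_pow_of_two_mul_le hβ2 0 n
    rw [zero_add] at this
    linarith [hg n, (by ring : 2 * β 0 / 2 / 2 ^ n = β 0 / 2 ^ n)]

theorem norm_sub_le_two_mul_of_tendsto (hβ2 : ∀ n, 2 * β (n + 1) ≤ β n)
    (hg : ∀ n, ‖g (n + 1) - g n‖ ≤ β n) {l : E} (hlim : Tendsto g atTop (𝓝 l)) (n : ℕ) :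
    ‖l - g n‖ ≤ 2 * β n := by
  have hgeom : ∀ k, dist (g (k + n)) (g (k + 1 + n)) ≤ 2 * β n / 2 / 2 ^ k := fun k => by
    rw [dist_comm, dist_eq_norm, add_right_comm, add_comm k n]
    linarith [hg (n + k), le_div_two_pow_of_two_mul_le hβ2 n k,
      (by ring : 2 * β n / 2 / 2 ^ k = β n / 2 ^ k)]
  simpa [dist_eq_norm, norm_sub_rev] using
    dist_le_of_le_geometric_two_of_tendsto₀ hgeom ((tendsto_add_atTop_iff_nat n).2 hlim)

end Weights

section Perturbation

variable {X Y : Type*} [NormedAddCommGroup X] [NormedSpace ℝ X] [NormedAddCommGroup Y]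
  [NormedSpace ℝ Y]

theorem ContinuousLinearMap.opNorm_le_of_forall_mem_norm_apply_le {S : Set X}
    (hS : Metric.closedBall 0 1 ⊆ closure (convexHull ℝ S)) (U : X →L[ℝ] Y) {r : ℝ}
    (hU : ∀ x ∈ S, ‖U x‖ ≤ r) : ‖U‖ ≤ r := by
  have hball : ∀ z ∈ Metric.closedBall (0 : X) 1, ‖U z‖ ≤ r := by
    have hconv : Convex ℝ (U ⁻¹' Metric.closedBall 0 r) :=
      (convex_closedBall 0 r).is_linear_preimage U.toLinearMap.isLinear
    have hclosed : IsClosed (U ⁻¹' Metric.closedBall 0 r) :=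
      Metric.isClosed_closedBall.preimage U.continuous
    intro z hz
    simpa using closure_minimal (convexHull_min (fun x hx => by simpa using hU x hx) hconv)
      hclosed (hS hz)
  exact U.opNorm_le_of_unit_norm (by simpa using hball 0 (by simp))
    fun z hz => hball z (by simp [hz])

theorem ContinuousLinearMap.exists_mem_lt_norm_apply {S : Set X}
    (hS : Metric.closedBall 0 1 ⊆ closure (convexHull ℝ S)) (U : X →L[ℝ] Y) {ρ : ℝ}
    (hρ : 0 < ρ) : ∃ x ∈ S, ‖U‖ - ρ < ‖U x‖ := by
  by_contra! h
  linarith [U.opNorm_le_of_forall_mem_norm_apply_le hS h]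

theorem exists_norm_eq_one_norm_add_smul [Nontrivial Y] (w : Y) :
    ∃ y : Y, ‖y‖ = 1 ∧ ∀ b : ℝ, 0 ≤ b → ‖w + b • y‖ = ‖w‖ + b := by
  rcases eq_or_ne w 0 with rfl | hw
  · obtain ⟨y, hy⟩ := exists_norm_eq Y zero_le_one
    exact ⟨y, hy, fun b hb => by simp [norm_smul, hy, abs_of_nonneg hb]⟩
  · refine ⟨‖w‖⁻¹ • w, norm_smul_inv_norm hw, fun b hb => ?_⟩
    have hw' : 0 < ‖w‖ := norm_pos_iff.2 hw
    calc ‖w + b • ‖w‖⁻¹ • w‖ = ‖(1 + b / ‖w‖) • w‖ := by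
          rw [add_smul, one_smul, smul_smul, div_eq_mul_inv]
      _ = ‖w‖ + b := by
          rw [norm_smul, Real.norm_of_nonneg (by positivity)]
          field_simp

theorem exists_rankOne_perturbation [Nontrivial Y] (U : X →L[ℝ] Y) {f : X →L[ℝ] ℝ}
    (hf : ‖f‖ ≤ 1) {x : X} (hfx : f x = 1) {β : ℝ} (hβ : 0 ≤ β) :
    ∃ V : X →L[ℝ] Y, ‖V - U‖ ≤ β ∧ ‖V x‖ = ‖U x‖ + β ∧
      ∀ u : X, ‖u‖ ≤ 1 → ‖V u‖ ≤ ‖U‖ + β * |f u| := by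
  obtain ⟨y, hy, hUxy⟩ := exists_norm_eq_one_norm_add_smul (U x)
  have hV : ∀ u, (U + β • f.smulRight y) u = U u + (β * f u) • y := fun u => by
    simp [smul_smul]
  refine ⟨U + β • f.smulRight y, ?_, ?_, fun u hu => ?_⟩
  · rw [add_sub_cancel_left, norm_smul, f.norm_smulRight_apply, hy, mul_one,
      Real.norm_of_nonneg hβ]
    exact mul_le_of_le_one_right hβ hf
  · rw [hV, hfx, mul_one, hUxy β hβ]
  · calc ‖(U + β • f.smulRight y) u‖ ≤ ‖U u‖ + ‖(β * f u) • y‖ := hV u ▸ norm_add_le _ _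
      _ ≤ ‖U‖ + β * |f u| := by
          rw [norm_smul, hy, mul_one, Real.norm_eq_abs, abs_mul, abs_of_nonneg hβ]
          gcongr
          exact U.unit_le_opNorm u hu

-- The properties of `Tₙ₊₁ = Tₙ + βₙ fₙ ⊗ yₙ` with `fₙ aₙ = 1` and `yₙ` along `Tₙ aₙ`.
structure IsBumpSeq (β : ℕ → ℝ) (T : ℕ → X →L[ℝ] Y) (a : ℕ → X) (f : ℕ → X →L[ℝ] ℝ) :
    Prop where
  norm_le_one : ∀ n, ‖a n‖ ≤ 1
  norm_sub_le : ∀ n, ‖T (n + 1) - T n‖ ≤ β n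
  lt_norm_apply : ∀ n, ‖T n‖ + β n - β (n + 1) < ‖T (n + 1) (a n)‖
  norm_apply_le : ∀ n u, ‖u‖ ≤ 1 → ‖T (n + 1) u‖ ≤ ‖T n‖ + β n * |f n u|

theorem exists_isBumpSeq [Nontrivial Y] {S : Set X}
    (hS : Metric.closedBall 0 1 ⊆ closure (convexHull ℝ S)) (hSph : ∀ x ∈ S, ‖x‖ = 1)
    {F : X → X →L[ℝ] ℝ} (hF : ∀ x ∈ S, ‖F x‖ = 1 ∧ F x x = 1) (T : X →L[ℝ] Y) {β : ℕ → ℝ}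
    (hβ : ∀ n, 0 < β n) :
    ∃ (Ts : ℕ → X →L[ℝ] Y) (a : ℕ → X),
      Ts 0 = T ∧ (∀ n, a n ∈ S) ∧ IsBumpSeq β Ts a (fun n => F (a n)) := by
  have hstep : ∀ (n : ℕ) (U : X →L[ℝ] Y), ∃ x ∈ S, ∃ V : X →L[ℝ] Y, ‖V - U‖ ≤ β n ∧
      ‖U‖ + β n - β (n + 1) < ‖V x‖ ∧ ∀ u : X, ‖u‖ ≤ 1 → ‖V u‖ ≤ ‖U‖ + β n * |F x u| := by
    intro n U
    obtain ⟨x, hxS, hx⟩ := U.exists_mem_lt_norm_apply hS (hβ (n + 1))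
    obtain ⟨V, hVU, hVx, hV⟩ :=
      exists_rankOne_perturbation U (hF x hxS).1.le (hF x hxS).2 (hβ n).le
    exact ⟨x, hxS, V, hVU, by linarith, hV⟩
  choose p hpS V hVU hVp hV using hstep
  let Ts : ℕ → X →L[ℝ] Y := fun n => Nat.rec T (fun n U => V n U) n
  exact ⟨Ts, fun n => p n (Ts n), rfl, fun n => hpS n _,
    ⟨fun n => (hSph _ (hpS n _)).le, fun n => hVU n _, fun n => hVp n _, fun n => hV n _⟩⟩

namespace IsBumpSeq

variable {β : ℕ → ℝ} {Ts : ℕ → X →L[ℝ] Y} {a : ℕ → X} {f : ℕ → X →L[ℝ] ℝ} {T' : X →L[ℝ] Y}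

theorem norm_le_norm_succ (h : IsBumpSeq β Ts a f) (hβ : ∀ n, 0 < β n)
    (hβ2 : ∀ n, 2 * β (n + 1) ≤ β n) (n : ℕ) : ‖Ts n‖ ≤ ‖Ts (n + 1)‖ := by
  linarith [h.lt_norm_apply n, (Ts (n + 1)).unit_le_opNorm (a n) (h.norm_le_one n), hβ2 n,
    hβ (n + 1)]

theorem norm_le_of_tendsto (h : IsBumpSeq β Ts a f) (hβ : ∀ n, 0 < β n)
    (hβ2 : ∀ n, 2 * β (n + 1) ≤ β n) (hlim : Tendsto Ts atTop (𝓝 T')) (n : ℕ) :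
    ‖Ts n‖ ≤ ‖T'‖ :=
  (monotone_nat_of_le_succ (h.norm_le_norm_succ hβ hβ2)).ge_of_tendsto hlim.norm n

theorem norm_sub_apply_le (h : IsBumpSeq β Ts a f) (hβ2 : ∀ n, 2 * β (n + 1) ≤ β n)
    (hlim : Tendsto Ts atTop (𝓝 T')) (n : ℕ) {u : X} (hu : ‖u‖ ≤ 1) :
    ‖T' u - Ts n u‖ ≤ 2 * β n :=
  ((T' - Ts n).unit_le_opNorm u hu).trans (norm_sub_le_two_mul_of_tendsto hβ2 h.norm_sub_le hlim n)

theorem mul_one_sub_abs_le (h : IsBumpSeq β Ts a f) (hβ : ∀ n, 0 < β n)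
    (hβ2 : ∀ n, 2 * β (n + 1) ≤ β n) (hlim : Tendsto Ts atTop (𝓝 T')) (n : ℕ) {u : X}
    (hu : ‖u‖ ≤ 1) : β n * (1 - |f n u|) ≤ ‖T'‖ - ‖T' u‖ + 3 * β (n + 1) := by
  rw [mul_sub, mul_one]
  linarith [h.norm_sub_apply_le hβ2 hlim (n + 1) hu, norm_sub_norm_le (T' u) (Ts (n + 1) u),
    h.norm_apply_le n u hu,
    h.lt_norm_apply n, (Ts (n + 1)).unit_le_opNorm (a n) (h.norm_le_one n),
    h.norm_le_of_tendsto hβ hβ2 hlim (n + 1)]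

theorem tendsto_norm_apply (h : IsBumpSeq β Ts a f) (hβ : ∀ n, 0 < β n)
    (hβ2 : ∀ n, 2 * β (n + 1) ≤ β n) (hlim : Tendsto Ts atTop (𝓝 T')) :
    Tendsto (fun n => ‖T' (a n)‖) atTop (𝓝 ‖T'‖) := by
  have hlower : ∀ n, ‖T'‖ - 4 * β n ≤ ‖T' (a n)‖ := fun n => by
    have h₁ := h.norm_sub_apply_le hβ2 hlim (n + 1) (h.norm_le_one n)
    rw [norm_sub_rev] at h₁
    linarith [norm_sub_norm_le (Ts (n + 1) (a n)) (T' (a n)), norm_sub_norm_le T' (Ts n),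
      norm_sub_le_two_mul_of_tendsto hβ2 h.norm_sub_le hlim n, h.lt_norm_apply n, hβ2 n,
      hβ (n + 1)]
  refine tendsto_of_tendsto_of_tendsto_of_le_of_le ?_ tendsto_const_nhds hlower
    fun n => T'.unit_le_opNorm _ (h.norm_le_one n)
  simpa using tendsto_const_nhds.sub ((tendsto_zero_of_two_mul_le hβ hβ2).const_mul 4)

theorem absStronglyExposing [CompleteSpace X] {S : Set X} {F : X → X →L[ℝ] ℝ}
    (hexp : ∀ ε > (0 : ℝ), ∃ δ > (0 : ℝ), ∀ x ∈ S, ∀ z : X, ‖z‖ ≤ 1 → F x z > 1 - δ →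
      ‖x - z‖ < ε)
    (hSph : ∀ x ∈ S, ‖x‖ = 1) (haS : ∀ n, a n ∈ S) (h : IsBumpSeq β Ts a (fun n => F (a n)))
    (hβ : ∀ n, 0 < β n) (hβ2 : ∀ n, 2 * β (n + 1) ≤ β n)
    (hratio : Tendsto (fun n => β (n + 1) / β n) atTop (𝓝 0))
    (hlim : Tendsto Ts atTop (𝓝 T')) : AbsStronglyExposing T' := by
  refine absStronglyExposing_of_eventually_signDist_lt (fun n => hSph _ (haS n))
    (h.tendsto_norm_apply hβ hβ2 hlim) fun ε hε => ?_
  obtain ⟨δ, hδ, hδε⟩ := exists_pos_forall_signDist_lt hexp hε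
  obtain ⟨n, hn⟩ := (hratio.eventually (gt_mem_nhds (by positivity : (0 : ℝ) < δ / 6))).exists
  rw [div_lt_iff₀ (hβ n)] at hn
  refine ⟨n, fun u hu hTu => ?_⟩
  have hgap : ‖T'‖ - β n * δ / 2 < ‖T'‖ := by linarith [mul_pos (hβ n) hδ]
  filter_upwards [hTu.eventually (lt_mem_nhds hgap)] with k hk
  refine hδε _ (haS n) _ (hu k) ?_
  have hbound : β n * (1 - |F (a n) (u k)|) < β n * δ := by
    linarith [h.mul_one_sub_abs_le hβ hβ2 hlim n (hu k)]
  linarith [lt_of_mul_lt_mul_left hbound (hβ n).le]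

end IsBumpSeq

end Perturbation

/-- If the unit sphere of a Banach space `X` contains a uniformly strongly exposed set `S`
whose closed convex hull is `B_X`, then for every nonzero Banach space `Y` the absolutely
strongly exposing operators are dense in `L(X,Y)`. -/
theorem stmt_19 {X : Type*} [NormedAddCommGroup X] [NormedSpace ℝ X] [CompleteSpace X]
    (S : Set X) (hS : UnifStronglyExposed S)
    (hull : closure (convexHull ℝ S) = Metric.closedBall (0 : X) 1)
    {Y : Type*} [NormedAddCommGroup Y] [NormedSpace ℝ Y] [CompleteSpace Y] [Nontrivial Y]
    (T : X →L[ℝ] Y) (ε : ℝ) (hε : 0 < ε) :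
    ∃ S' : X →L[ℝ] Y, AbsStronglyExposing S' ∧ ‖T - S'‖ < ε := by
  obtain ⟨hSph, F, hF, hexp⟩ := hS
  obtain ⟨β, hβ0, hβ, hβ2, hratio⟩ := exists_weights_ratio_tendsto_zero (by positivity : 0 < ε / 3)
  obtain ⟨Ts, a, hT, haS, hseq⟩ := exists_isBumpSeq hull.ge hSph hF T hβ
  obtain ⟨S', hlim⟩ :=
    cauchySeq_tendsto_of_complete (cauchySeq_of_norm_sub_le hβ2 hseq.norm_sub_le)
  refine ⟨S', hseq.absStronglyExposing hexp hSph haS hβ hβ2 hratio hlim, ?_⟩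
  calc ‖T - S'‖ = ‖S' - Ts 0‖ := by rw [hT, norm_sub_rev]
    _ ≤ 2 * β 0 := norm_sub_le_two_mul_of_tendsto hβ2 hseq.norm_sub_le hlim 0
    _ < ε := by linarith
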